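/- arXiv:1907.08014 — 8 statements merged into one kernel-verified Lean document; each statement's English description precedes it below -/
import Mathlib

section
/- Let $x_0 \ge 0$, $b \in \mathbb{R}$, $a \ge b$ with $x_0 + b > 0$. Define $f(x,c) = \frac{(c^2(x+a)+1)^2}{c^4(x+b)(x+a)+x_0+b}$. Then for all $x \ge x_0$ and all $c \in \mathbb{R}$, $f(x,c) \le f(x_0,1) = \frac{x_0+a+1}{x_0+b}$. -/
theorem stmt0 (x0 a b : ℝ) (hx0 : 0 ≤ x0) (hab : b ≤ a) (hb : 0 < x0 + b)
    (x c : ℝ) (hx : x0 ≤ x) :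
    (c ^ 2 * (x + a) + 1) ^ 2 / (c ^ 4 * (x + b) * (x + a) + x0 + b)
      ≤ (x0 + a + 1) / (x0 + b) := by
  have hxb : 0 < x + b := by linarith
  have hxa : 0 < x + a := by linarith
  have hD : 0 < c ^ 4 * (x + b) * (x + a) + x0 + b := by
    have : 0 ≤ c ^ 4 * (x + b) * (x + a) := by positivity
    linarith
  rw [div_le_div_iff₀ hD hb]
  set A : ℝ := (x + a) * ((a - b) * (x - x0) + (x + b)) with hAdef
  have hA : 0 < A := by
    apply mul_pos hxa
    nlinarith [mul_nonneg (sub_nonneg.2 hab) (sub_nonneg.2 hx)]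
  set d : ℝ := (x0 + a + 1) * (c ^ 4 * (x + b) * (x + a) + x0 + b)
      - (c ^ 2 * (x + a) + 1) ^ 2 * (x0 + b) with hddef
  have key : 4 * A * d = (2 * A * c ^ 2 - 2 * (x + a) * (x0 + b)) ^ 2
      + 4 * ((x + a) * (x0 + b) * ((a - b) * (x - x0)) * (1 + x0 + a)) := by
    rw [hddef, hAdef]; ring
  have h2 : 0 ≤ 4 * A * d := by
    rw [key]
    have h3 : 0 ≤ (x + a) * (x0 + b) * ((a - b) * (x - x0)) * (1 + x0 + a) := by
      apply mul_nonneg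
      · apply mul_nonneg (mul_nonneg hxa.le hb.le)
        exact mul_nonneg (sub_nonneg.2 hab) (sub_nonneg.2 hx)
      · linarith
    nlinarith [sq_nonneg (2 * A * c ^ 2 - 2 * (x + a) * (x0 + b))]
  have hd : 0 ≤ d := by
    by_contra h
    push_neg at h
    nlinarith
  linarith [hd]
end

section
/- Let $x_0 \ge 0$, $b \in \mathbb{R}$, $a > b$ with $x_0 + b > 0$. Define $f(x,c) = \frac{(c^2(x+a)+1)^2}{c^4(x+b)(x+a)+x_0+b}$. If $x \ge x_0$, $c \in \mathbb{R}$, and $f(x,c) = \frac{x_0+a+1}{x_0+b}$, then $x = x_0$ and $c = 1$ or $c = -1$. -/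
theorem stmt1 (x0 a b : ℝ) (hx0 : 0 ≤ x0) (hab : b < a) (hb : 0 < x0 + b)
    (x c : ℝ) (hx : x0 ≤ x)
    (heq : (c ^ 2 * (x + a) + 1) ^ 2 / (c ^ 4 * (x + b) * (x + a) + x0 + b)
      = (x0 + a + 1) / (x0 + b)) :
    x = x0 ∧ (c = 1 ∨ c = -1) := by
  have hxb : 0 < x + b := by linarith
  have hxa : 0 < x + a := by linarith
  have hc4 : (0:ℝ) ≤ c ^ 4 := by positivity
  have hD : 0 < c ^ 4 * (x + b) * (x + a) + x0 + b := by
    have := mul_nonneg (mul_nonneg hc4 hxb.le) hxa.le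
    linarith
  have hkey : (c ^ 2 * (x + a) + 1) ^ 2 * (x0 + b)
      = (x0 + a + 1) * (c ^ 4 * (x + b) * (x + a) + x0 + b) :=
    (div_eq_div_iff hD.ne' hb.ne').mp heq
  obtain ⟨u, hupos, hu⟩ : ∃ u, 0 ≤ u ∧ c ^ 2 = u := ⟨c ^ 2, sq_nonneg c, rfl⟩
  have hc4u : c ^ 4 = u ^ 2 := by rw [← hu]; ring
  rw [hc4u, hu] at hkey
  have hta : 0 < x0 + a := by linarith
  have hpoly : u ^ 2 * (x + a) * ((a - b) * (x - x0) + (x + b))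
      - 2 * (x0 + b) * u * (x + a) + (x0 + b) * (x0 + a) = 0 := by
    linear_combination -hkey
  have hxx0 : x = x0 := by
    by_contra h
    have hd : 0 < x - x0 := sub_pos.mpr (lt_of_le_of_ne hx (Ne.symm h))
    have hA : 0 < (x + a) * ((a - b) * (x - x0) + (x + b)) := by
      have : 0 < (a - b) * (x - x0) := mul_pos (by linarith) hd
      nlinarith
    have hE : 0 < (x0 + a) * (a - b + 1) - (x0 + b) := by nlinarith
    have hid : (2 * ((x + a) * ((a - b) * (x - x0) + (x + b))) * u - 2 * (x0 + b) * (x + a)) ^ 2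
        + 4 * (x0 + b) * (x + a) * (x - x0) * ((x0 + a) * (a - b + 1) - (x0 + b))
        = 4 * ((x + a) * ((a - b) * (x - x0) + (x + b)))
          * (u ^ 2 * (x + a) * ((a - b) * (x - x0) + (x + b))
            - 2 * (x0 + b) * u * (x + a) + (x0 + b) * (x0 + a)) := by ring
    rw [hpoly, mul_zero] at hid
    have hpos : 0 < 4 * (x0 + b) * (x + a) * (x - x0) * ((x0 + a) * (a - b + 1) - (x0 + b)) := by
      have := mul_pos (mul_pos (mul_pos (mul_pos (by linarith : (0:ℝ) < 4) hb) hxa) hd) hE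
      linarith
    linarith [sq_nonneg (2 * ((x + a) * ((a - b) * (x - x0) + (x + b))) * u
      - 2 * (x0 + b) * (x + a))]
  refine ⟨hxx0, ?_⟩
  rw [hxx0] at hpoly
  have hu1 : u = 1 := by
    have h2 : (x0 + b) * (x0 + a) * (u - 1) ^ 2 = 0 := by linear_combination hpoly
    rcases mul_eq_zero.mp h2 with h3 | h3
    · exact absurd h3 (by positivity)
    · have := pow_eq_zero_iff (n := 2) (by norm_num) |>.mp h3
      linarith
  have hfac : (c - 1) * (c + 1) = 0 := by linear_combination hu + hu1
  rcases mul_eq_zero.mp hfac with h | h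
  · left; linarith
  · right; linarith
end

section
/- Let $r \ge 1$ be an integer and $a \ge 0$. Define $f(x_1,\dots,x_r) = \frac{(x_1+\cdots+x_r+a)^2}{x_1^2+\cdots+x_r^2+a x_1}$. Then for all $x_1 \ge 1$ and $x_2,\dots,x_r > 0$, $f(x_1,\dots,x_r) \le r + a$. -/
theorem stmt8 (r : ℕ) (hr : 1 ≤ r) (a : ℝ) (ha : 0 ≤ a)
    (x : Fin r → ℝ) (hx1 : 1 ≤ x ⟨0, hr⟩) (hxi : ∀ i, i ≠ ⟨0, hr⟩ → 0 < x i) :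
    (∑ i, x i + a) ^ 2 / (∑ i, x i ^ 2 + a * x ⟨0, hr⟩) ≤ r + a := by
  have hxnn : ∀ i, 0 ≤ x i := by
    intro i
    by_cases h : i = ⟨0, hr⟩
    · subst h; linarith
    · exact (hxi i h).le
  set S := ∑ i, x i with hS
  set Q := ∑ i, x i ^ 2 with hQ
  have h1 : S ^ 2 ≤ (r : ℝ) * Q := by
    have := sq_sum_le_card_mul_sum_sq (s := Finset.univ) (f := x)
    simpa using this
  have h2 : 2 * S ≤ Q + r := by
    have : ∑ i : Fin r, 2 * x i ≤ ∑ i : Fin r, (x i ^ 2 + 1) := by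
      apply Finset.sum_le_sum
      intro i _
      nlinarith [sq_nonneg (x i - 1)]
    simpa [Finset.sum_add_distrib, ← Finset.mul_sum] using this
  have hQ1 : x ⟨0, hr⟩ ^ 2 ≤ Q := by
    apply Finset.single_le_sum (f := fun i => x i ^ 2) (fun i _ => sq_nonneg _)
    exact Finset.mem_univ _
  have hQpos : 0 < Q + a * x ⟨0, hr⟩ := by
    have : (1 : ℝ) ≤ x ⟨0, hr⟩ ^ 2 := by nlinarith
    nlinarith [mul_nonneg ha (hxnn ⟨0, hr⟩)]
  rw [div_le_iff₀ hQpos]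
  have hr1 : (1 : ℝ) ≤ r := by exact_mod_cast hr
  nlinarith [mul_nonneg ha (sub_nonneg.2 h2), mul_nonneg (mul_nonneg ha ha) (sub_nonneg.2 hx1),
    mul_nonneg (mul_nonneg ha (by linarith : (0:ℝ) ≤ (r:ℝ))) (sub_nonneg.2 hx1)]
end

section
/- Let $r \ge 1$ be an integer and $a > 0$. If $x_1 \ge 1$, $x_2,\dots,x_r > 0$ and $\frac{(x_1+\cdots+x_r+a)^2}{x_1^2+\cdots+x_r^2+a x_1} = r + a$, then $x_1 = x_2 = \cdots = x_r = 1$. -/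
theorem stmt9 (r : ℕ) (hr : 1 ≤ r) (a : ℝ) (ha : 0 < a)
    (x : Fin r → ℝ) (hx1 : 1 ≤ x ⟨0, hr⟩) (hxi : ∀ i, i ≠ ⟨0, hr⟩ → 0 < x i)
    (heq : (∑ i, x i + a) ^ 2 / (∑ i, x i ^ 2 + a * x ⟨0, hr⟩) = r + a) :
    ∀ i, x i = 1 := by
  set i0 : Fin r := ⟨0, hr⟩ with hi0
  have hx1pos : (0:ℝ) < x i0 := lt_of_lt_of_le one_pos hx1
  set S := ∑ i, x i with hS
  set Q := ∑ i, x i ^ 2 with hQdef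
  have hQ : 0 ≤ Q := Finset.sum_nonneg fun i _ => sq_nonneg _
  have hden : 0 < Q + a * x i0 := by positivity
  have key : (S + a) ^ 2 = (r + a) * (Q + a * x i0) := by
    field_simp at heq
    linarith [heq]
  have hCS : S ^ 2 ≤ r * Q := by
    have := sq_sum_le_card_mul_sum_sq (s := Finset.univ) (f := x)
    simpa [Finset.card_univ] using this
  have hTexp : ∑ i, (x i - 1) ^ 2 = Q - 2 * S + r := by
    have : ∀ i ∈ Finset.univ, (x i - 1) ^ 2 = x i ^ 2 - 2 * x i + 1 :=
      fun i _ => by ring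
    rw [Finset.sum_congr rfl this, Finset.sum_add_distrib, Finset.sum_sub_distrib,
      ← Finset.mul_sum, Finset.sum_const, Finset.card_univ, Fintype.card_fin]
    push_cast
    ring
  have hT : 0 ≤ ∑ i, (x i - 1) ^ 2 := Finset.sum_nonneg fun i _ => sq_nonneg _
  have hpos : 0 ≤ a * (↑r + a) * (x i0 - 1) := by
    have : (0:ℝ) ≤ ↑r + a := by positivity
    have h1 : (0:ℝ) ≤ x i0 - 1 := by linarith
    positivity
  have hsum0 : ∑ i, (x i - 1) ^ 2 = 0 := by
    nlinarith [key, hCS, hT, hpos, hTexp, ha]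
  intro i
  have := (Finset.sum_eq_zero_iff_of_nonneg (fun i _ => sq_nonneg (x i - 1))).mp
    hsum0 i (Finset.mem_univ i)
  nlinarith [this]
end

section
/- Let $A$ be an $n \times n$ real normal matrix (i.e. $A A^T = A^T A$) and $N$ a real matrix such that $A$ lies in the closure of the conjugation orbit $\{g(A+N)g^{-1} : g \in GL_n(\mathbb{R})\}$. Then for every $g \in GL_n(\mathbb{R})$, $\|g(A+N)g^{-1}\| \ge \|A\|$, where $\|\cdot\|$ is the Frobenius norm. -/
/-!
Conjugation preserves the characteristic polynomial, which depends continuously on the matrix,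
so `A` and every `g (A + N) g⁻¹` have the same complex eigenvalues `λᵢ`. By Schur
triangularization a complex matrix `M` is unitarily conjugate to an upper triangular matrix with
diagonal `λᵢ`, and unitary conjugation preserves the Frobenius norm, so `‖M‖² ≥ ∑ |λᵢ|²`.
For a normal matrix the triangular form is diagonal, hence `‖A‖² = ∑ |λᵢ|² ≤ ‖g (A + N) g⁻¹‖²`.
-/

open Matrix Module

/-- Frobenius norm of a real square matrix. -/
noncomputable def frobNorm {n : ℕ} (A : Matrix (Fin n) (Fin n) ℝ) : ℝ :=
  Real.sqrt (∑ i, ∑ j, A i j ^ 2)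

theorem Matrix.charpoly_eq_of_mem_closure_conj {K n : Type*} [Field K] [Infinite K]
    [TopologicalSpace K] [IsTopologicalRing K] [T1Space K] [Fintype n] [DecidableEq n]
    {A B : Matrix n n K}
    (h : A ∈ closure {M | ∃ g : GL n K, M = (g : Matrix n n K) * B * (↑g⁻¹ : Matrix n n K)}) :
    A.charpoly = B.charpoly := by
  refine Polynomial.funext fun t => ?_
  have hclosed : IsClosed {M : Matrix n n K | M.charpoly.eval t = B.charpoly.eval t} := by
    simp only [eval_charpoly]
    exact isClosed_eq (continuous_const.sub continuous_id).matrix_det continuous_const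
  refine closure_minimal ?_ hclosed h
  rintro _ ⟨g, rfl⟩
  simp [coe_units_inv]

section Schur

variable {E : Type*} [NormedAddCommGroup E] [InnerProductSpace ℂ E]

open InnerProductSpace in
theorem LinearMap.exists_orthonormal_inner_apply_eq_zero_of_lt {n : ℕ} [FiniteDimensional ℂ E]
    (hE : finrank ℂ E = n) (T : E →ₗ[ℂ] E) :
    ∃ b : Fin n → E, Orthonormal ℂ b ∧ ∀ i j, j < i → ⟪b i, T (b j)⟫_ℂ = 0 := by
  induction n generalizing E with
  | zero => exact ⟨Fin.elim0, Orthonormal.of_isEmpty _, fun i => i.elim0⟩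
  | succ k ih =>
    have : Nontrivial E := Module.nontrivial_of_finrank_eq_succ hE
    obtain ⟨μ, hμ⟩ := Module.End.exists_eigenvalue T
    obtain ⟨v, hv⟩ := hμ.exists_hasEigenvector
    set u : E := (‖v‖⁻¹ : ℂ) • v
    have hu : ‖u‖ = 1 := by simp [u, norm_smul, hv.2]
    have hTu : T u = μ • u := by
      simp only [u, map_smul, hv.apply_eq_smul, smul_comm μ]
    set W := (ℂ ∙ u)ᗮ
    have : Fact (finrank ℂ E = k + 1) := ⟨hE⟩
    -- `W` need not be `T`-invariant; its compression `P_W ∘ T` has the same entries `⟪w, T w'⟫`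
    obtain ⟨c, hc, hcT⟩ := ih (Submodule.finrank_orthogonal_span_singleton
      (norm_ne_zero_iff.mp (by simp [hu])))
      (W.orthogonalProjectionOnto.toLinearMap ∘ₗ T ∘ₗ W.subtype)
    have huc : ∀ i, ⟪u, (c i : E)⟫_ℂ = 0 := fun i =>
      Submodule.mem_orthogonal_singleton_iff_inner_right.mp (c i).2
    refine ⟨Matrix.vecCons u (W.subtype ∘ c), ?_, ?_⟩
    · exact orthonormal_vecCons_iff.mpr ⟨hu, huc, hc.comp_linearIsometry W.subtypeₗᵢ⟩
    · intro i j hji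
      obtain ⟨i, rfl⟩ := Fin.exists_succ_eq.mpr (Fin.ne_zero_of_lt hji)
      cases j using Fin.cases with
      | zero => simp [hTu, inner_eq_zero_symm.mp (huc i)]
      | succ j => simpa using hcT i j (Fin.succ_lt_succ_iff.mp hji)

end Schur

theorem Matrix.conjTranspose_mul_mul_apply_eq_inner {𝕜 m n : Type*} [RCLike 𝕜] [Fintype m]
    [Fintype n] [DecidableEq n] (b : m → EuclideanSpace 𝕜 n) (X : Matrix n n 𝕜) (i j : m) :
    ((of fun k l => b l k)ᴴ * X * of fun k l => b l k) i j =
      inner 𝕜 (b i) (toLpLin 2 2 X (b j)) := by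
  simp only [mul_apply, PiLp.inner_apply, toLpLin_apply, mulVec, dotProduct, Finset.sum_mul,
    conjTranspose_apply, of_apply, RCLike.inner_apply, RCLike.star_def]
  rw [Finset.sum_comm]
  exact Finset.sum_congr rfl fun _ _ => Finset.sum_congr rfl fun _ _ => by ring

theorem Matrix.exists_mem_unitaryGroup_isUpperTriangular_conj {m : ℕ}
    (M : Matrix (Fin m) (Fin m) ℂ) :
    ∃ U ∈ unitaryGroup (Fin m) ℂ, (star U * M * U).IsUpperTriangular := by
  obtain ⟨b, hb, hbM⟩ := (toLpLin 2 2 M).exists_orthonormal_inner_apply_eq_zero_of_lt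
    (finrank_euclideanSpace_fin (𝕜 := ℂ))
  refine ⟨of fun k l => b l k, ?_, fun i j hji => ?_⟩
  · rw [mem_unitaryGroup_iff']
    ext i j
    simpa [star_eq_conjTranspose, one_apply, ← orthonormal_iff_ite.mp hb i j] using
      conjTranspose_mul_mul_apply_eq_inner b 1 i j
  · rw [star_eq_conjTranspose, conjTranspose_mul_mul_apply_eq_inner]
    exact hbM i j hji

section UnitaryConj

variable {R n : Type*} [CommRing R] [StarRing R] [Fintype n] [DecidableEq n]
  {U : Matrix n n R}

theorem Matrix.charpoly_conj_of_mem_unitaryGroup (hU : U ∈ unitaryGroup n R)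
    (M : Matrix n n R) : (star U * M * U).charpoly = M.charpoly := by
  rw [mul_assoc, charpoly_mul_comm, mul_assoc, mem_unitaryGroup_iff.mp hU, mul_one]

theorem Matrix.conj_mul_conj_of_mem_unitaryGroup (hU : U ∈ unitaryGroup n R)
    (X Y : Matrix n n R) : (star U * X * U) * (star U * Y * U) = star U * (X * Y) * U := by
  simp only [mul_assoc]
  rw [← mul_assoc U, mem_unitaryGroup_iff.mp hU, one_mul]

omit [DecidableEq n] in
theorem Matrix.star_conj (U X : Matrix n n R) : star (star U * X * U) = star U * star X * U := by
  simp only [star_mul, star_star, mul_assoc]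

theorem Matrix.trace_conj_of_mem_unitaryGroup (hU : U ∈ unitaryGroup n R) (X : Matrix n n R) :
    trace (star U * X * U) = trace X := by
  rw [mul_assoc, trace_mul_comm, mul_assoc, mem_unitaryGroup_iff.mp hU, mul_one]

end UnitaryConj

theorem Matrix.sum_normSq_eq_trace {n : Type*} [Fintype n] (M : Matrix n n ℂ) :
    ((∑ i, ∑ j, Complex.normSq (M i j) : ℝ) : ℂ) = trace (M * star M) := by
  simp [trace, mul_apply, Complex.mul_conj]

theorem Matrix.sum_normSq_conj_of_mem_unitaryGroup {n : Type*} [Fintype n] [DecidableEq n]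
    {U : Matrix n n ℂ} (hU : U ∈ unitaryGroup n ℂ) (M : Matrix n n ℂ) :
    ∑ i, ∑ j, Complex.normSq ((star U * M * U) i j) = ∑ i, ∑ j, Complex.normSq (M i j) := by
  have h : (star U * M * U) * star (star U * M * U) = star U * (M * star M) * U := by
    rw [star_conj, conj_mul_conj_of_mem_unitaryGroup hU]
  exact_mod_cast (sum_normSq_eq_trace _).trans <| h ▸ (trace_conj_of_mem_unitaryGroup hU _).trans
    (sum_normSq_eq_trace M).symm

theorem Matrix.IsUpperTriangular.roots_charpoly {R n : Type*} [CommRing R] [IsDomain R]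
    [Fintype n] [DecidableEq n] [LinearOrder n] {T : Matrix n n R} (hT : T.IsUpperTriangular) :
    T.charpoly.roots = Finset.univ.val.map fun i => T i i := by
  rw [charpoly_of_isUpperTriangular T hT, Finset.prod_eq_multiset_prod]
  simpa [Multiset.map_map, Function.comp_def] using
    Polynomial.roots_multiset_prod_X_sub_C (Finset.univ.val.map fun i => T i i)

theorem eq_zero_of_sum_row_eq_sum_col {m : ℕ} {a : Fin m → Fin m → ℝ} (ha : ∀ i j, 0 ≤ a i j)
    (hlow : ∀ i j, j < i → a i j = 0) (hrow : ∀ i, ∑ j, a i j = ∑ j, a j i) {i j : Fin m}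
    (hij : i < j) : a i j = 0 := by
  -- `∑ᵢ ∑ⱼ (j - i) aᵢⱼ` vanishes because row and column sums agree, and all its terms are `≥ 0`
  set w : Fin m → Fin m → ℝ := fun i j => ((j : ℕ) - (i : ℕ) : ℝ) * a i j
  have hw : ∀ i j, 0 ≤ w i j := fun i j => by
    rcases lt_or_ge j i with h | h
    · simp [w, hlow i j h]
    · exact mul_nonneg (sub_nonneg.mpr (by exact_mod_cast h)) (ha i j)
  have hsum : ∑ i, ∑ j, w i j = 0 := by
    simp only [w, sub_mul, Finset.sum_sub_distrib, ← Finset.mul_sum]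
    rw [Finset.sum_comm]
    simp only [← Finset.mul_sum, hrow, sub_self]
  have := (Finset.sum_eq_zero_iff_of_nonneg fun j _ => hw i j).mp
    ((Finset.sum_eq_zero_iff_of_nonneg fun i _ => Finset.sum_nonneg fun j _ => hw i j).mp
      hsum i (Finset.mem_univ i)) j (Finset.mem_univ j)
  exact (mul_eq_zero.mp this).resolve_left
    (sub_ne_zero.mpr (by exact_mod_cast Fin.val_ne_of_ne hij.ne'))

theorem Matrix.IsUpperTriangular.isDiag_of_mul_star_comm {m : ℕ} {T : Matrix (Fin m) (Fin m) ℂ}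
    (hT : T.IsUpperTriangular) (hnormal : T * star T = star T * T) : T.IsDiag := by
  have hrow : ∀ i, ∑ j, Complex.normSq (T i j) = ∑ j, Complex.normSq (T j i) := fun i => by
    have := congrFun₂ hnormal i i
    simp only [mul_apply, star_apply, RCLike.star_def, Complex.mul_conj,
      ← Complex.normSq_eq_conj_mul_self] at this
    exact_mod_cast this
  intro i j hij
  rcases hij.lt_or_gt with h | h
  · exact Complex.normSq_eq_zero.mp <| eq_zero_of_sum_row_eq_sum_col
      (fun _ _ => Complex.normSq_nonneg _) (fun _ _ h => by simp [hT h]) hrow h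
  · exact hT h

theorem Matrix.sum_normSq_roots_charpoly_le {m : ℕ} (M : Matrix (Fin m) (Fin m) ℂ) :
    (M.charpoly.roots.map Complex.normSq).sum ≤ ∑ i, ∑ j, Complex.normSq (M i j) := by
  obtain ⟨U, hU, hT⟩ := exists_mem_unitaryGroup_isUpperTriangular_conj M
  rw [← charpoly_conj_of_mem_unitaryGroup hU, hT.roots_charpoly, Multiset.map_map,
    ← sum_normSq_conj_of_mem_unitaryGroup hU]
  exact Finset.sum_le_sum fun i _ =>
    Finset.single_le_sum (fun j _ => Complex.normSq_nonneg _) (Finset.mem_univ i)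

theorem Matrix.sum_normSq_roots_charpoly_eq_of_mul_star_comm {m : ℕ}
    {M : Matrix (Fin m) (Fin m) ℂ} (hM : M * star M = star M * M) :
    (M.charpoly.roots.map Complex.normSq).sum = ∑ i, ∑ j, Complex.normSq (M i j) := by
  obtain ⟨U, hU, hT⟩ := exists_mem_unitaryGroup_isUpperTriangular_conj M
  have hdiag : (star U * M * U).IsDiag := hT.isDiag_of_mul_star_comm <| by
    rw [star_conj, conj_mul_conj_of_mem_unitaryGroup hU, conj_mul_conj_of_mem_unitaryGroup hU, hM]
  rw [← charpoly_conj_of_mem_unitaryGroup hU, hT.roots_charpoly, Multiset.map_map,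
    ← sum_normSq_conj_of_mem_unitaryGroup hU]
  refine Finset.sum_congr rfl fun i _ => ?_
  rw [Function.comp_apply, Finset.sum_eq_single_of_mem i (Finset.mem_univ i)
    fun j _ hji => by rw [hdiag hji.symm, map_zero]]

theorem Matrix.sum_normSq_map_ofReal {n : Type*} [Fintype n] (A : Matrix n n ℝ) :
    ∑ i, ∑ j, Complex.normSq (A.map Complex.ofRealHom i j) = ∑ i, ∑ j, A i j ^ 2 := by
  simp [Complex.normSq_ofReal, sq]

theorem stmt12 (n : ℕ) (A N : Matrix (Fin n) (Fin n) ℝ)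
    (hA : A * Aᵀ = Aᵀ * A)
    (hcl : A ∈ closure {M : Matrix (Fin n) (Fin n) ℝ |
      ∃ g : GL (Fin n) ℝ, M = (g : Matrix (Fin n) (Fin n) ℝ) * (A + N) * (↑g⁻¹ : Matrix (Fin n) (Fin n) ℝ)}) :
    ∀ g : GL (Fin n) ℝ,
      frobNorm A ≤ frobNorm ((g : Matrix (Fin n) (Fin n) ℝ) * (A + N) * (↑g⁻¹ : Matrix (Fin n) (Fin n) ℝ)) := by
  intro g
  set B := (g : Matrix (Fin n) (Fin n) ℝ) * (A + N) * (↑g⁻¹ : Matrix (Fin n) (Fin n) ℝ)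
  have hchar : B.charpoly = A.charpoly := by
    rw [charpoly_eq_of_mem_closure_conj hcl]
    simp [B, coe_units_inv]
  have hnormal : A.map Complex.ofRealHom * star (A.map Complex.ofRealHom) =
      star (A.map Complex.ofRealHom) * A.map Complex.ofRealHom := by
    have hstar : star (A.map Complex.ofRealHom) = Aᵀ.map Complex.ofRealHom := by ext; simp
    rw [hstar, ← Matrix.map_mul, ← Matrix.map_mul, hA]
  rw [frobNorm, frobNorm, ← sum_normSq_map_ofReal, ← sum_normSq_map_ofReal]
  refine Real.sqrt_le_sqrt ?_
  calc _ = ((A.map Complex.ofRealHom).charpoly.roots.map Complex.normSq).sum :=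
        (sum_normSq_roots_charpoly_eq_of_mul_star_comm hnormal).symm
    _ = ((B.map Complex.ofRealHom).charpoly.roots.map Complex.normSq).sum := by
        rw [charpoly_map, charpoly_map, hchar]
    _ ≤ _ := sum_normSq_roots_charpoly_le _
end

section
/- Let $A$ be an $n \times n$ real normal matrix. Then $\|A\| \le \|g A g^{-1}\|$ for all $g \in GL_n(\mathbb{R})$, where $\|\cdot\|$ denotes the Frobenius norm. Moreover, equality for a given $g$ implies $g A g^{-1}$ is normal. -/
/-!
Diagonalizing `gᵀ g` writes `g = h W` with `W` orthogonal and `hᵀ h = diag(d)`, `d > 0`. The matrix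
`C = W A W⁻¹` is again normal with `‖C‖ = ‖A‖`, and `‖g A g⁻¹‖² = ∑ᵢⱼ Cᵢⱼ² dᵢ / dⱼ`. Normality says
that the weights `cᵢⱼ = Cᵢⱼ²` have equal row and column sums, so `∑ᵢⱼ cᵢⱼ (log dᵢ - log dⱼ) = 0`,
and `x - 1 - log x ≥ 0` gives `∑ᵢⱼ cᵢⱼ dᵢ / dⱼ ≥ ∑ᵢⱼ cᵢⱼ`. Equality forces `dᵢ = dⱼ` whenever
`Cᵢⱼ ≠ 0`, i.e. `C` commutes with `hᵀ h`, and then `h C h⁻¹ = g A g⁻¹` is normal.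
-/

open Matrix

section BalancedWeights

variable {ι : Type*} [Fintype ι] {c : ι → ι → ℝ}

theorem sum_sum_mul_sub_eq_zero (hc : ∀ i, ∑ j, c i j = ∑ j, c j i) (f : ι → ℝ) :
    ∑ i, ∑ j, c i j * (f i - f j) = 0 := by
  simp only [mul_sub, Finset.sum_sub_distrib, ← Finset.sum_mul]
  rw [Finset.sum_comm (f := fun i j => c i j * f j)]
  simp only [← Finset.sum_mul, hc, sub_self]

theorem sum_sum_mul_div_sub_sum_sum (hc : ∀ i, ∑ j, c i j = ∑ j, c j i) {d : ι → ℝ}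
    (hd : ∀ i, 0 < d i) :
    ∑ i, ∑ j, c i j * (d i / d j) - ∑ i, ∑ j, c i j =
      ∑ i, ∑ j, c i j * (d i / d j - 1 - Real.log (d i / d j)) := by
  have hlog := sum_sum_mul_sub_eq_zero hc fun i => Real.log (d i)
  simp only [Real.log_div (hd _).ne' (hd _).ne']
  simp only [mul_sub, mul_one, Finset.sum_sub_distrib] at hlog ⊢
  linarith

theorem sum_sum_le_sum_sum_mul_div (hc0 : ∀ i j, 0 ≤ c i j) (hc : ∀ i, ∑ j, c i j = ∑ j, c j i)
    {d : ι → ℝ} (hd : ∀ i, 0 < d i) :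
    ∑ i, ∑ j, c i j ≤ ∑ i, ∑ j, c i j * (d i / d j) := by
  rw [← sub_nonneg, sum_sum_mul_div_sub_sum_sum hc hd]
  refine Finset.sum_nonneg fun i _ => Finset.sum_nonneg fun j _ => mul_nonneg (hc0 i j) ?_
  linarith [Real.log_le_sub_one_of_pos (div_pos (hd i) (hd j))]

theorem eq_zero_or_eq_of_sum_sum_mul_div_eq (hc0 : ∀ i j, 0 ≤ c i j)
    (hc : ∀ i, ∑ j, c i j = ∑ j, c j i) {d : ι → ℝ} (hd : ∀ i, 0 < d i)
    (heq : ∑ i, ∑ j, c i j * (d i / d j) = ∑ i, ∑ j, c i j) (i j : ι) :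
    c i j = 0 ∨ d i = d j := by
  have hterm : ∀ i j, 0 ≤ c i j * (d i / d j - 1 - Real.log (d i / d j)) := fun i j =>
    mul_nonneg (hc0 i j) (by linarith [Real.log_le_sub_one_of_pos (div_pos (hd i) (hd j))])
  have hzero := sum_sum_mul_div_sub_sum_sum hc hd
  rw [heq, sub_self, eq_comm, Fintype.sum_eq_zero_iff_of_nonneg fun i =>
    Finset.sum_nonneg fun j _ => hterm i j] at hzero
  have hij : c i j * (d i / d j - 1 - Real.log (d i / d j)) = 0 :=
    congrFun ((Fintype.sum_eq_zero_iff_of_nonneg (hterm i)).mp (congrFun hzero i)) j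
  refine (mul_eq_zero.mp hij).imp_right fun hgap => ?_
  by_contra hne
  have hratio : d i / d j ≠ 1 := fun h => hne ((div_eq_one_iff_eq (hd j).ne').mp h)
  linarith [Real.log_lt_sub_one_of_pos (div_pos (hd i) (hd j)) hratio]

end BalancedWeights

section Conjugation

variable {ι : Type*} [Fintype ι]

theorem sum_sq_eq_trace_mul_transpose {R : Type*} [CommSemiring R] (M : Matrix ι ι R) :
    ∑ i, ∑ j, M i j ^ 2 = trace (M * Mᵀ) := by
  simp [trace, mul_apply, sq]

theorem Commute.sum_sq_row_eq_sum_sq_col {R : Type*} [CommSemiring R] {C : Matrix ι ι R}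
    (hC : Commute C Cᵀ) (i : ι) : ∑ j, C i j ^ 2 = ∑ j, C j i ^ 2 := by
  simpa [mul_apply, sq] using congrFun (congrFun hC.eq i) i

variable [DecidableEq ι]

theorem commute_diagonal_of_forall_eq_zero_or_eq {R : Type*} [CommSemiring R]
    {C : Matrix ι ι R} {d : ι → R} (h : ∀ i j, C i j = 0 ∨ d i = d j) :
    Commute (diagonal d) C := by
  ext i j
  rw [diagonal_mul, mul_diagonal]
  rcases h i j with h | h <;> simp [h, mul_comm]

theorem trace_diagonal_mul_mul_diagonal_mul_transpose {R : Type*} [CommSemiring R]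
    (C : Matrix ι ι R) (a b : ι → R) :
    trace (diagonal a * C * diagonal b * Cᵀ) = ∑ i, ∑ j, C i j ^ 2 * (a i * b j) := by
  rw [show diagonal a * C * diagonal b = of fun i j => a i * C i j * b j by ext; simp]
  simp only [trace, diag, mul_apply, of_apply, transpose_apply]
  exact Finset.sum_congr rfl fun i _ => Finset.sum_congr rfl fun j _ => by ring

theorem Commute.conj_of_commute_transpose_mul_self {R : Type*} [CommRing R]
    {A : Matrix ι ι R} (hA : Commute A Aᵀ) (g : GL ι R)
    (hcomm : Commute A ((g : Matrix ι ι R)ᵀ * g)) :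
    Commute (g * A * g⁻¹ : Matrix ι ι R) (g * A * g⁻¹ : Matrix ι ι R)ᵀ := by
  set G : Matrix ι ι R := ↑g
  set H : Matrix ι ι R := ↑g⁻¹
  have hGH : G * H = 1 := g.mul_inv
  have hHG : H * G = 1 := g.inv_mul
  have hHGt : Hᵀ * Gᵀ = 1 := by rw [← transpose_mul, hGH, transpose_one]
  have hGHt : Gᵀ * Hᵀ = 1 := by rw [← transpose_mul, hHG, transpose_one]
  let P : (Matrix ι ι R)ˣ := ⟨Gᵀ * G, H * Hᵀ,
    by rw [mul_assoc, ← mul_assoc G, hGH, one_mul, hGHt],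
    by rw [mul_assoc, ← mul_assoc Hᵀ, hHGt, one_mul, hHG]⟩
  have hcommT : Commute Aᵀ (Gᵀ * G) := by
    simpa [Commute, SemiconjBy, transpose_mul, mul_assoc] using
      (congrArg transpose hcomm.eq).symm
  have hcommT' : Commute Aᵀ (H * Hᵀ) := hcommT.units_inv_right (u := P)
  calc G * A * H * (G * A * H)ᵀ = G * A * (H * Hᵀ * Aᵀ) * Gᵀ := by
        simp only [transpose_mul, mul_assoc]
    _ = G * (A * Aᵀ) * H := by
        rw [← hcommT'.eq]; simp only [mul_assoc, hHGt, mul_one]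
    _ = Hᵀ * (Gᵀ * G * Aᵀ) * A * H := by
        rw [hA.eq, ← mul_assoc Hᵀ, ← mul_assoc Hᵀ, hHGt, one_mul]; simp only [mul_assoc]
    _ = (G * A * H)ᵀ * (G * A * H) := by
        rw [← hcommT.eq]; simp only [transpose_mul, mul_assoc]

theorem pos_of_transpose_mul_self_eq_diagonal (g : GL ι ℝ) {d : ι → ℝ}
    (hg : (g : Matrix ι ι ℝ)ᵀ * g = diagonal d) (i : ι) : 0 < d i := by
  have hpos : (diagonal d).PosDef := by
    rw [← hg, ← conjTranspose_eq_transpose_of_trivial]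
    exact .conjTranspose_mul_self _ (mulVec_injective_iff_isUnit.mpr g.isUnit)
  exact posDef_diagonal_iff.mp hpos i

theorem sum_sq_conj_eq_of_transpose_mul_self_eq_diagonal (g : GL ι ℝ) (C : Matrix ι ι ℝ)
    {d : ι → ℝ} (hg : (g : Matrix ι ι ℝ)ᵀ * g = diagonal d) :
    ∑ i, ∑ j, (g * C * g⁻¹ : Matrix ι ι ℝ) i j ^ 2 = ∑ i, ∑ j, C i j ^ 2 * (d i / d j) := by
  set G : Matrix ι ι ℝ := ↑g
  set H : Matrix ι ι ℝ := ↑g⁻¹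
  have hGH : G * H = 1 := g.mul_inv
  have hHGt : Hᵀ * Gᵀ = 1 := by rw [← transpose_mul, hGH, transpose_one]
  have hinv : H * Hᵀ = diagonal d⁻¹ := by
    refine left_inv_eq_right_inv (a := diagonal d) ?_ ?_
    · rw [← hg, mul_assoc, ← mul_assoc Hᵀ, hHGt, one_mul, g.inv_mul]
    · rw [diagonal_mul_diagonal, ← diagonal_one]
      exact congrArg diagonal (funext fun i => mul_inv_cancel₀
        (pos_of_transpose_mul_self_eq_diagonal g hg i).ne')
  calc ∑ i, ∑ j, (G * C * H) i j ^ 2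
      = trace ((Gᵀ * G) * C * (H * Hᵀ) * Cᵀ) := by
        rw [sum_sq_eq_trace_mul_transpose, transpose_mul, transpose_mul,
          show G * C * H * (Hᵀ * (Cᵀ * Gᵀ)) = G * C * (H * Hᵀ) * Cᵀ * Gᵀ by simp only [mul_assoc],
          trace_mul_comm]
        simp only [mul_assoc]
    _ = ∑ i, ∑ j, C i j ^ 2 * (d i / d j) := by
        rw [hg, hinv, trace_diagonal_mul_mul_diagonal_mul_transpose]
        simp only [Pi.inv_apply, div_eq_mul_inv]

theorem sum_sq_conj_eq_of_orthogonal (W : GL ι ℝ) (hW : (W : Matrix ι ι ℝ)ᵀ * W = 1)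
    (A : Matrix ι ι ℝ) : ∑ i, ∑ j, (W * A * W⁻¹ : Matrix ι ι ℝ) i j ^ 2 = ∑ i, ∑ j, A i j ^ 2 := by
  rw [sum_sq_conj_eq_of_transpose_mul_self_eq_diagonal W A (hW.trans diagonal_one.symm)]
  simp only [div_one, mul_one]

theorem Commute.conj_of_orthogonal {A : Matrix ι ι ℝ} (hA : Commute A Aᵀ) (W : GL ι ℝ)
    (hW : (W : Matrix ι ι ℝ)ᵀ * W = 1) :
    Commute (W * A * W⁻¹ : Matrix ι ι ℝ) (W * A * W⁻¹ : Matrix ι ι ℝ)ᵀ :=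
  hA.conj_of_commute_transpose_mul_self W (hW ▸ Commute.one_right A)

theorem exists_eq_mul_orthogonal_of_transpose_mul_self_diagonal (g : GL ι ℝ) :
    ∃ (h W : GL ι ℝ) (d : ι → ℝ), (W : Matrix ι ι ℝ)ᵀ * W = 1 ∧
      (h : Matrix ι ι ℝ)ᵀ * h = diagonal d ∧ g = h * W := by
  have hP : ((g : Matrix ι ι ℝ)ᵀ * g).IsHermitian := by
    simpa [conjTranspose_eq_transpose_of_trivial] using
      isHermitian_conjTranspose_mul_self (g : Matrix ι ι ℝ)
  have hdiag := hP.conjStarAlgAut_star_eigenvectorUnitary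
  set U := hP.eigenvectorUnitary
  simp only [Unitary.conjStarAlgAut_apply, Unitary.coe_star, star_eq_conjTranspose,
    conjTranspose_eq_transpose_of_trivial, transpose_transpose, RCLike.ofReal_real_eq_id,
    CompTriple.comp_eq] at hdiag
  refine ⟨g * Unitary.toUnits U, (Unitary.toUnits U)⁻¹, hP.eigenvalues, ?_, ?_, by group⟩
  · simpa only [Unitary.val_inv_toUnits_apply, UnitaryGroup.inv_val, star_eq_conjTranspose,
      conjTranspose_eq_transpose_of_trivial, transpose_transpose, Unitary.coe_star] using
      Unitary.coe_mul_star_self U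
  · rw [← hdiag, Units.val_mul, Unitary.val_toUnits_apply, transpose_mul]
    simp only [mul_assoc]

theorem Commute.sum_sq_le_sum_sq_conj_of_diagonal {C : Matrix ι ι ℝ} (hC : Commute C Cᵀ)
    (g : GL ι ℝ) {d : ι → ℝ} (hg : (g : Matrix ι ι ℝ)ᵀ * g = diagonal d) :
    ∑ i, ∑ j, C i j ^ 2 ≤ ∑ i, ∑ j, (g * C * g⁻¹ : Matrix ι ι ℝ) i j ^ 2 := by
  rw [sum_sq_conj_eq_of_transpose_mul_self_eq_diagonal g C hg]
  exact sum_sum_le_sum_sum_mul_div (fun i j => sq_nonneg (C i j))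
    hC.sum_sq_row_eq_sum_sq_col (pos_of_transpose_mul_self_eq_diagonal g hg)

theorem Commute.conj_of_sum_sq_conj_eq_of_diagonal {C : Matrix ι ι ℝ} (hC : Commute C Cᵀ)
    (g : GL ι ℝ) {d : ι → ℝ} (hg : (g : Matrix ι ι ℝ)ᵀ * g = diagonal d)
    (heq : ∑ i, ∑ j, (g * C * g⁻¹ : Matrix ι ι ℝ) i j ^ 2 = ∑ i, ∑ j, C i j ^ 2) :
    Commute (g * C * g⁻¹ : Matrix ι ι ℝ) (g * C * g⁻¹ : Matrix ι ι ℝ)ᵀ := by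
  rw [sum_sq_conj_eq_of_transpose_mul_self_eq_diagonal g C hg] at heq
  have hblock := eq_zero_or_eq_of_sum_sum_mul_div_eq (fun i j => sq_nonneg (C i j))
    hC.sum_sq_row_eq_sum_sq_col (pos_of_transpose_mul_self_eq_diagonal g hg) heq
  refine hC.conj_of_commute_transpose_mul_self g ?_
  rw [hg]
  exact (commute_diagonal_of_forall_eq_zero_or_eq fun i j =>
    (hblock i j).imp_left sq_eq_zero_iff.mp).symm

theorem conj_mul_eq_conj_conj {R : Type*} [CommRing R] (h W : GL ι R) (A : Matrix ι ι R) :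
    ((h * W : GL ι R) * A * (h * W : GL ι R)⁻¹ : Matrix ι ι R) =
      h * (W * A * W⁻¹ : Matrix ι ι R) * h⁻¹ := by
  simp only [_root_.mul_inv_rev, Units.val_mul, mul_assoc]

theorem Commute.sum_sq_le_sum_sq_conj {A : Matrix ι ι ℝ} (hA : Commute A Aᵀ) (g : GL ι ℝ) :
    ∑ i, ∑ j, A i j ^ 2 ≤ ∑ i, ∑ j, (g * A * g⁻¹ : Matrix ι ι ℝ) i j ^ 2 := by
  obtain ⟨h, W, d, hW, hh, rfl⟩ := exists_eq_mul_orthogonal_of_transpose_mul_self_diagonal g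
  rw [conj_mul_eq_conj_conj, ← sum_sq_conj_eq_of_orthogonal W hW A]
  exact (hA.conj_of_orthogonal W hW).sum_sq_le_sum_sq_conj_of_diagonal h hh

theorem Commute.conj_of_sum_sq_conj_eq {A : Matrix ι ι ℝ} (hA : Commute A Aᵀ) (g : GL ι ℝ)
    (heq : ∑ i, ∑ j, (g * A * g⁻¹ : Matrix ι ι ℝ) i j ^ 2 = ∑ i, ∑ j, A i j ^ 2) :
    Commute (g * A * g⁻¹ : Matrix ι ι ℝ) (g * A * g⁻¹ : Matrix ι ι ℝ)ᵀ := by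
  obtain ⟨h, W, d, hW, hh, rfl⟩ := exists_eq_mul_orthogonal_of_transpose_mul_self_diagonal g
  rw [conj_mul_eq_conj_conj, ← sum_sq_conj_eq_of_orthogonal W hW A] at heq
  rw [conj_mul_eq_conj_conj]
  exact (hA.conj_of_orthogonal W hW).conj_of_sum_sq_conj_eq_of_diagonal h hh heq

end Conjugation

theorem stmt13 (n : ℕ) (A : Matrix (Fin n) (Fin n) ℝ) (hA : A * Aᵀ = Aᵀ * A) :
    ∀ g : GL (Fin n) ℝ,
      frobNorm A ≤ frobNorm ((g : Matrix (Fin n) (Fin n) ℝ) * A * (↑g⁻¹ : Matrix (Fin n) (Fin n) ℝ)) ∧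
      (frobNorm A = frobNorm ((g : Matrix (Fin n) (Fin n) ℝ) * A * (↑g⁻¹ : Matrix (Fin n) (Fin n) ℝ)) →
        ((g : Matrix (Fin n) (Fin n) ℝ) * A * (↑g⁻¹ : Matrix (Fin n) (Fin n) ℝ))
            * ((g : Matrix (Fin n) (Fin n) ℝ) * A * (↑g⁻¹ : Matrix (Fin n) (Fin n) ℝ))ᵀ
          = ((g : Matrix (Fin n) (Fin n) ℝ) * A * (↑g⁻¹ : Matrix (Fin n) (Fin n) ℝ))ᵀ
            * ((g : Matrix (Fin n) (Fin n) ℝ) * A * (↑g⁻¹ : Matrix (Fin n) (Fin n) ℝ))) := by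
  intro g
  have hA' : Commute A Aᵀ := hA
  have hnonneg (M : Matrix (Fin n) (Fin n) ℝ) : 0 ≤ ∑ i, ∑ j, M i j ^ 2 :=
    Finset.sum_nonneg fun i _ => Finset.sum_nonneg fun j _ => sq_nonneg _
  refine ⟨Real.sqrt_le_sqrt (hA'.sum_sq_le_sum_sq_conj g), fun heq => ?_⟩
  exact hA'.conj_of_sum_sq_conj_eq g ((Real.sqrt_inj (hnonneg _) (hnonneg _)).mp heq.symm)
end

section
/- Let $A$ be a real $n \times n$ normal matrix. Then $\mathrm{tr}\, S(A)^2 = \|S(A)\|^2 = \tfrac12 \|A\|^2 + \tfrac12 \mathrm{tr}(A^2)$, and for any $h \in GL_n(\mathbb{R})$ and any $B$ with $A$ in the closure of the conjugation orbit of $B$, $\mathrm{tr}\, S(hBh^{-1})^2 \ge \mathrm{tr}\, S(A)^2$. -/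
/-!
For `S = S(X)` symmetric, `tr S² = ‖S‖²`, and expanding `S²` gives `tr S² = ½‖X‖² + ½ tr X²`.
The functions `X ↦ tr X²` and `X ↦ det (t - X)` are continuous and invariant under conjugation,
so `A`, `B` and `hBh⁻¹` share `tr X²` and the characteristic polynomial; it remains to see
`‖A‖² ≤ ‖hBh⁻¹‖²`. Schur triangularisation `M = U T U*` gives
`∑ |λᵢ|² = ∑ |Tᵢᵢ|² ≤ ‖T‖² = ‖M‖²` for every complex matrix, with equality for normal `M`
because a normal triangular matrix is diagonal. Hence
`‖A‖² = ∑ |λᵢ(A)|² = ∑ |λᵢ(hBh⁻¹)|² ≤ ‖hBh⁻¹‖²`.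
-/

open Matrix

/-- Symmetric part of a matrix. -/
noncomputable def symPart {n : ℕ} (X : Matrix (Fin n) (Fin n) ℝ) :
    Matrix (Fin n) (Fin n) ℝ :=
  (1 / 2 : ℝ) • (X + Xᵀ)

open Polynomial

lemma IsStarNormal.star_mul_mul_of_mem_unitary {R : Type*} [Monoid R] [StarMul R] {U x : R}
    (hU : U ∈ unitary R) (hx : IsStarNormal x) : IsStarNormal (star U * x * U) := by
  have hUU : U * star U = 1 := Unitary.mul_star_self_of_mem hU
  constructor
  calc star (star U * x * U) * (star U * x * U) = star U * (star x * (U * star U) * x) * U := by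
        simp only [star_mul, star_star, mul_assoc]
    _ = star U * (x * (U * star U) * star x) * U := by
        rw [hUU, mul_one, mul_one, hx.star_comm_self.eq]
    _ = (star U * x * U) * star (star U * x * U) := by simp only [star_mul, star_star, mul_assoc]

namespace Matrix

section Frobenius
variable {𝕜 : Type*} [RCLike 𝕜]

lemma trace_mul_conjTranspose_self {m n : Type*} [Fintype m] [Fintype n]
    (M : Matrix m n 𝕜) : (M * Mᴴ).trace = ((∑ i, ∑ j, ‖M i j‖ ^ 2 : ℝ) : 𝕜) := by
  simp [trace, mul_apply, RCLike.mul_conj]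

lemma sum_norm_sq_unitary_conj {n : Type*} [Fintype n] [DecidableEq n]
    (M : Matrix n n 𝕜) {U : Matrix n n 𝕜} (hU : U ∈ unitaryGroup n 𝕜) :
    ∑ i, ∑ j, ‖(star U * M * U) i j‖ ^ 2 = ∑ i, ∑ j, ‖M i j‖ ^ 2 := by
  have hUU : U * star U = 1 := mem_unitaryGroup_iff.mp hU
  have hconj : (star U * M * U) * star (star U * M * U) = star U * (M * star M) * U := by
    simp only [star_mul, star_star, Matrix.mul_assoc]
    rw [← Matrix.mul_assoc U, hUU, Matrix.one_mul]
  apply RCLike.ofReal_injective (K := 𝕜)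
  rw [← trace_mul_conjTranspose_self, ← trace_mul_conjTranspose_self, ← star_eq_conjTranspose,
    ← star_eq_conjTranspose, hconj, trace_mul_cycle, hUU, Matrix.one_mul]

lemma sum_norm_sq_col_eq_row {n : Type*} [Fintype n] {T : Matrix n n 𝕜}
    (hT : IsStarNormal T) (i : n) : ∑ k, ‖T k i‖ ^ 2 = ∑ k, ‖T i k‖ ^ 2 := by
  have h := congr_fun₂ hT.star_comm_self.eq i i
  simp only [mul_apply, star_apply, RCLike.star_def, RCLike.conj_mul, RCLike.mul_conj] at h
  exact_mod_cast h

lemma IsUpperTriangular.isDiag_of_isStarNormal {n : Type*} [Fintype n] [LinearOrder n]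
    {T : Matrix n n 𝕜} (hT : T.IsUpperTriangular) (hN : IsStarNormal T) : T.IsDiag := by
  suffices hrow : ∀ i j, i < j → T i j = 0 from
    fun i j hij => hij.lt_or_gt.elim (hrow i j) (fun h => hT h)
  intro i
  -- rows above `i` are already diagonal, so column `i` is `T i i e_i`; normality says that
  -- row `i` has the same norm, so its off-diagonal entries vanish
  induction i using WellFoundedLT.induction with
  | ind i ih =>
  have hcol : ∑ k, ‖T k i‖ ^ 2 = ‖T i i‖ ^ 2 := by
    refine Finset.sum_eq_single i (fun k _ hki => ?_) (by simp)
    rcases hki.lt_or_gt with hk | hk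
    · rw [ih k hk i hk, norm_zero, zero_pow two_ne_zero]
    · rw [hT hk, norm_zero, zero_pow two_ne_zero]
  have hoff : ∑ k ∈ Finset.univ.erase i, ‖T i k‖ ^ 2 = 0 := by
    have := Finset.add_sum_erase Finset.univ (fun k => ‖T i k‖ ^ 2) (Finset.mem_univ i)
    linarith [sum_norm_sq_col_eq_row hN i]
  intro j hij
  have := (Finset.sum_eq_zero_iff_of_nonneg (fun k _ => by positivity)).mp hoff j
    (Finset.mem_erase.mpr ⟨hij.ne', Finset.mem_univ j⟩)
  simpa using this

end Frobenius

section OneBlockDiag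
variable {R : Type*} [Semiring R] {n : ℕ}

/-- The block-diagonal matrix `diag(1, W)`. -/
def oneBlockDiag (W : Matrix (Fin n) (Fin n) R) : Matrix (Fin (n + 1)) (Fin (n + 1)) R :=
  of (Fin.cons (Fin.cons 1 0) fun i => Fin.cons 0 (W i))

@[simp] lemma oneBlockDiag_zero_zero (W : Matrix (Fin n) (Fin n) R) :
    oneBlockDiag W 0 0 = 1 := rfl
@[simp] lemma oneBlockDiag_zero_succ (W : Matrix (Fin n) (Fin n) R) (j : Fin n) :
    oneBlockDiag W 0 j.succ = 0 := rfl
@[simp] lemma oneBlockDiag_succ_zero (W : Matrix (Fin n) (Fin n) R) (i : Fin n) :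
    oneBlockDiag W i.succ 0 = 0 := rfl
@[simp] lemma oneBlockDiag_succ_succ (W : Matrix (Fin n) (Fin n) R) (i j : Fin n) :
    oneBlockDiag W i.succ j.succ = W i j := rfl

lemma oneBlockDiag_mul (W₁ W₂ : Matrix (Fin n) (Fin n) R) :
    oneBlockDiag W₁ * oneBlockDiag W₂ = oneBlockDiag (W₁ * W₂) := by
  ext i j
  cases i using Fin.cases <;> cases j using Fin.cases <;> simp [mul_apply, Fin.sum_univ_succ]

lemma oneBlockDiag_one : oneBlockDiag (1 : Matrix (Fin n) (Fin n) R) = 1 := by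
  ext i j
  cases i using Fin.cases <;> cases j using Fin.cases <;>
    simp [one_apply, Fin.succ_ne_zero, (Fin.succ_ne_zero _).symm]

variable [StarRing R]

lemma star_oneBlockDiag (W : Matrix (Fin n) (Fin n) R) :
    star (oneBlockDiag W) = oneBlockDiag (star W) := by
  ext i j
  cases i using Fin.cases <;> cases j using Fin.cases <;> simp

lemma star_oneBlockDiag_mul_mul_succ_zero (W : Matrix (Fin n) (Fin n) R)
    {N : Matrix (Fin (n + 1)) (Fin (n + 1)) R} (hN : ∀ i : Fin n, N i.succ 0 = 0) (i : Fin n) :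
    (star (oneBlockDiag W) * N * oneBlockDiag W) i.succ 0 = 0 := by
  simp [star_oneBlockDiag, mul_apply, Fin.sum_univ_succ, hN]

lemma star_oneBlockDiag_mul_mul_succ_succ (W : Matrix (Fin n) (Fin n) R)
    (N : Matrix (Fin (n + 1)) (Fin (n + 1)) R) (i j : Fin n) :
    (star (oneBlockDiag W) * N * oneBlockDiag W) i.succ j.succ =
      (star W * N.submatrix Fin.succ Fin.succ * W) i j := by
  simp [star_oneBlockDiag, mul_apply, Fin.sum_univ_succ]

end OneBlockDiag

lemma oneBlockDiag_mem_unitaryGroup {R : Type*} [CommRing R] [StarRing R] {n : ℕ}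
    {W : Matrix (Fin n) (Fin n) R} (hW : W ∈ unitaryGroup (Fin n) R) :
    oneBlockDiag W ∈ unitaryGroup (Fin (n + 1)) R := by
  rw [mem_unitaryGroup_iff, star_oneBlockDiag, oneBlockDiag_mul, mem_unitaryGroup_iff.mp hW,
    oneBlockDiag_one]

lemma star_mul_mul_apply_eq_zero_of_mulVec_eq_smul {R : Type*} [CommRing R] [StarRing R] {ι : Type*}
    [Fintype ι] [DecidableEq ι] {U M : Matrix ι ι R} (hU : U ∈ unitaryGroup ι R) {μ : R} {j : ι}
    (hμ : M *ᵥ Uᵀ j = μ • Uᵀ j) {i : ι} (hij : i ≠ j) : (star U * M * U) i j = 0 := by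
  have hMU : ∀ k, (M * U) k j = μ * U k j := fun k => congr_fun hμ k
  have hUU : (star U * U) i j = 0 := by rw [mem_unitaryGroup_iff'.mp hU, one_apply_ne hij]
  rw [Matrix.mul_assoc, mul_apply]
  simp only [hMU, mul_left_comm _ μ, ← Finset.mul_sum]
  rw [← mul_apply, hUU, mul_zero]

lemma exists_mem_unitaryGroup_mulVec_transpose_zero_eq_smul {n : ℕ}
    (M : Matrix (Fin (n + 1)) (Fin (n + 1)) ℂ) :
    ∃ U ∈ unitaryGroup (Fin (n + 1)) ℂ, ∃ μ : ℂ, M *ᵥ Uᵀ 0 = μ • Uᵀ 0 := by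
  -- the columns of `U` are an orthonormal basis starting with a unit eigenvector of `M`
  obtain ⟨μ, hμ⟩ := Module.End.exists_eigenvalue (toEuclideanLin M)
  obtain ⟨v, hv⟩ := hμ.exists_hasEigenvector
  set u := (‖v‖⁻¹ : ℂ) • v
  have hu : ‖u‖ = 1 := by simp [u, norm_smul, hv.2]
  have hMu : toEuclideanLin M u = μ • u := by
    rw [map_smul, hv.apply_eq_smul, smul_comm]
  obtain ⟨b, hb⟩ := Orthonormal.exists_orthonormalBasis_extension_of_card_eq
    (𝕜 := ℂ) (by simp) (v := fun _ : Fin (n + 1) => u) (s := {0})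
    (orthonormal_subsingleton_iff.mpr fun _ => hu)
  refine ⟨(EuclideanSpace.basisFun _ ℂ).toBasis.toMatrix b,
    (EuclideanSpace.basisFun _ ℂ).toMatrix_orthonormalBasis_mem_unitary b, μ, ?_⟩
  have hcol : ((EuclideanSpace.basisFun _ ℂ).toBasis.toMatrix b)ᵀ 0 = WithLp.ofLp u := by
    ext k; simp [Module.Basis.toMatrix_apply, hb 0 rfl]
  rw [hcol, ← WithLp.ofLp_smul, ← hMu]
  rfl

theorem exists_mem_unitaryGroup_isUpperTriangular {n : ℕ} (M : Matrix (Fin n) (Fin n) ℂ) :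
    ∃ U ∈ unitaryGroup (Fin n) ℂ, (star U * M * U).IsUpperTriangular := by
  induction n with
  | zero => exact ⟨1, one_mem _, fun i => i.elim0⟩
  | succ n ih =>
  obtain ⟨U, hU, μ, hμ⟩ := exists_mem_unitaryGroup_mulVec_transpose_zero_eq_smul M
  set N := star U * M * U
  have hN : ∀ i : Fin n, N i.succ 0 = 0 := fun i =>
    star_mul_mul_apply_eq_zero_of_mulVec_eq_smul hU hμ (Fin.succ_ne_zero i)
  obtain ⟨W, hW, hT⟩ := ih (N.submatrix Fin.succ Fin.succ)
  refine ⟨U * oneBlockDiag W, mul_mem hU (oneBlockDiag_mem_unitaryGroup hW), ?_⟩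
  have hconj : star (U * oneBlockDiag W) * M * (U * oneBlockDiag W) =
      star (oneBlockDiag W) * N * oneBlockDiag W := by
    simp only [N, star_mul, Matrix.mul_assoc]
  intro i j hji
  rw [hconj]
  cases i using Fin.cases with
  | zero => exact absurd hji (Fin.not_lt_zero j)
  | succ i =>
  cases j using Fin.cases with
  | zero => exact star_oneBlockDiag_mul_mul_succ_zero W hN i
  | succ j =>
  rw [star_oneBlockDiag_mul_mul_succ_succ]
  exact hT (Fin.succ_lt_succ_iff.mp hji)

lemma roots_charpoly_of_isUpperTriangular {R : Type*} [CommRing R] [IsDomain R] {ι : Type*}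
    [Fintype ι] [DecidableEq ι] [LinearOrder ι] {T : Matrix ι ι R} (hT : T.IsUpperTriangular) :
    T.charpoly.roots = Finset.univ.val.map fun i => T i i := by
  rw [charpoly_of_isUpperTriangular T hT, roots_prod _ _ (Finset.prod_ne_zero_iff.mpr
    fun i _ => X_sub_C_ne_zero _)]
  simp

lemma sum_norm_sq_roots_charpoly_eq_sum_diag {n : ℕ} {M U : Matrix (Fin n) (Fin n) ℂ}
    (hU : U ∈ unitaryGroup (Fin n) ℂ) (hT : (star U * M * U).IsUpperTriangular) :
    (M.charpoly.roots.map (‖·‖ ^ 2)).sum = ∑ i, ‖(star U * M * U) i i‖ ^ 2 := by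
  have hcp : (star U * M * U).charpoly = M.charpoly := by
    rw [charpoly_mul_comm, ← Matrix.mul_assoc, mem_unitaryGroup_iff.mp hU, Matrix.one_mul]
  rw [← hcp, roots_charpoly_of_isUpperTriangular hT, Multiset.map_map]
  rfl

theorem sum_norm_sq_roots_charpoly_le {n : ℕ} (M : Matrix (Fin n) (Fin n) ℂ) :
    (M.charpoly.roots.map (‖·‖ ^ 2)).sum ≤ ∑ i, ∑ j, ‖M i j‖ ^ 2 := by
  obtain ⟨U, hU, hT⟩ := exists_mem_unitaryGroup_isUpperTriangular M
  rw [sum_norm_sq_roots_charpoly_eq_sum_diag hU hT, ← sum_norm_sq_unitary_conj M hU]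
  exact Finset.sum_le_sum fun i _ =>
    Finset.single_le_sum (f := fun j => ‖(star U * M * U) i j‖ ^ 2) (fun _ _ => by positivity)
      (Finset.mem_univ i)

theorem sum_norm_sq_roots_charpoly_of_isStarNormal {n : ℕ} {M : Matrix (Fin n) (Fin n) ℂ}
    (hM : IsStarNormal M) : (M.charpoly.roots.map (‖·‖ ^ 2)).sum = ∑ i, ∑ j, ‖M i j‖ ^ 2 := by
  obtain ⟨U, hU, hT⟩ := exists_mem_unitaryGroup_isUpperTriangular M
  have hdiag := hT.isDiag_of_isStarNormal (hM.star_mul_mul_of_mem_unitary hU)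
  rw [sum_norm_sq_roots_charpoly_eq_sum_diag hU hT, ← sum_norm_sq_unitary_conj M hU]
  refine Finset.sum_congr rfl fun i _ => ?_
  rw [Finset.sum_eq_single_of_mem i (Finset.mem_univ i) fun j _ hji => ?_]
  rw [hdiag hji.symm, norm_zero, zero_pow two_ne_zero]

end Matrix

lemma eq_of_mem_closure_units_conj {M α : Type*} [Monoid M] [TopologicalSpace M]
    [TopologicalSpace α] [T2Space α] {f : M → α} (hf : Continuous f)
    (hconj : ∀ (g : Mˣ) (x : M), f (g * x * ↑g⁻¹) = f x) {a b : M}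
    (ha : a ∈ closure {x | ∃ g : Mˣ, x = g * b * ↑g⁻¹}) : f a = f b :=
  closure_minimal (by rintro _ ⟨g, rfl⟩; exact hconj g b) (isClosed_eq hf continuous_const) ha

namespace Matrix

section Conjugation
variable {ι : Type*} [Fintype ι] [DecidableEq ι]

lemma charpoly_eq_of_mem_closure_conj_s15 {K : Type*} [Field K] [Infinite K]
    [TopologicalSpace K] [IsTopologicalRing K] [T2Space K] {A B : Matrix ι ι K}
    (hA : A ∈ closure {M | ∃ g : GL ι K, M = (g : Matrix ι ι K) * B * (↑g⁻¹ : Matrix ι ι K)}) :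
    A.charpoly = B.charpoly :=
  Polynomial.funext fun t => eq_of_mem_closure_units_conj (f := fun X => X.charpoly.eval t)
    (by simp only [eval_charpoly]; fun_prop)
    (fun g X => by rw [coe_units_inv, charpoly_units_conj]) hA

lemma trace_mul_self_units_conj {R : Type*} [CommRing R] (g : (Matrix ι ι R)ˣ)
    (X : Matrix ι ι R) : (((g : Matrix ι ι R) * X * (↑g⁻¹ : Matrix ι ι R)) *
      ((g : Matrix ι ι R) * X * (↑g⁻¹ : Matrix ι ι R))).trace = (X * X).trace := by
  rw [← trace_units_conj g (X * X)]
  simp only [Matrix.mul_assoc, Units.inv_mul_cancel_left]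

lemma trace_mul_self_eq_of_mem_closure_conj {R : Type*} [CommRing R] [TopologicalSpace R]
    [IsTopologicalRing R] [T2Space R] {A B : Matrix ι ι R}
    (hA : A ∈ closure {M | ∃ g : GL ι R, M = (g : Matrix ι ι R) * B * (↑g⁻¹ : Matrix ι ι R)}) :
    (A * A).trace = (B * B).trace :=
  eq_of_mem_closure_units_conj (f := fun X => (X * X).trace)
    (continuous_id.matrix_mul continuous_id).matrix_trace trace_mul_self_units_conj hA

end Conjugation

end Matrix

section Real
variable {n : ℕ}

lemma frobNorm_sq (A : Matrix (Fin n) (Fin n) ℝ) : frobNorm A ^ 2 = (A * Aᵀ).trace := by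
  rw [frobNorm, Real.sq_sqrt (by positivity)]
  simp [trace, mul_apply, sq]

lemma frobNorm_sq_eq_sum_norm_sq_map (A : Matrix (Fin n) (Fin n) ℝ) :
    frobNorm A ^ 2 = ∑ i, ∑ j, ‖A.map Complex.ofRealHom i j‖ ^ 2 := by
  rw [frobNorm, Real.sq_sqrt (by positivity)]
  simp

lemma isStarNormal_map_ofReal {A : Matrix (Fin n) (Fin n) ℝ} (hA : A * Aᵀ = Aᵀ * A) :
    IsStarNormal (A.map Complex.ofRealHom) := by
  have hstar : star (A.map Complex.ofRealHom) = Aᵀ.map Complex.ofRealHom := by ext; simp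
  exact ⟨by rw [Commute, SemiconjBy, hstar, ← Matrix.map_mul, ← Matrix.map_mul, hA]⟩

lemma frobNorm_sq_le_of_charpoly_eq {A M : Matrix (Fin n) (Fin n) ℝ} (hA : A * Aᵀ = Aᵀ * A)
    (h : A.charpoly = M.charpoly) : frobNorm A ^ 2 ≤ frobNorm M ^ 2 := by
  have hC : (A.map Complex.ofRealHom).charpoly = (M.map Complex.ofRealHom).charpoly := by
    rw [charpoly_map, charpoly_map, h]
  rw [frobNorm_sq_eq_sum_norm_sq_map, frobNorm_sq_eq_sum_norm_sq_map,
    ← sum_norm_sq_roots_charpoly_of_isStarNormal (isStarNormal_map_ofReal hA), hC]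
  exact sum_norm_sq_roots_charpoly_le _

lemma symPart_transpose (X : Matrix (Fin n) (Fin n) ℝ) : (symPart X)ᵀ = symPart X := by
  simp [symPart, add_comm]

lemma trace_symPart_mul_self_eq_frobNorm_sq (X : Matrix (Fin n) (Fin n) ℝ) :
    (symPart X * symPart X).trace = frobNorm (symPart X) ^ 2 := by
  rw [frobNorm_sq, symPart_transpose]

lemma trace_symPart_mul_self (X : Matrix (Fin n) (Fin n) ℝ) :
    (symPart X * symPart X).trace = 1 / 2 * frobNorm X ^ 2 + 1 / 2 * (X * X).trace := by
  have h1 : (Xᵀ * Xᵀ).trace = (X * X).trace := by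
    rw [← trace_transpose, transpose_mul, transpose_transpose]
  have h2 : (Xᵀ * X).trace = (X * Xᵀ).trace := trace_mul_comm _ _
  simp only [frobNorm_sq, symPart, Matrix.smul_mul, Matrix.mul_smul, Matrix.add_mul,
    Matrix.mul_add, trace_smul, trace_add, smul_eq_mul, h1, h2]
  ring

end Real

theorem stmt15 (n : ℕ) (A : Matrix (Fin n) (Fin n) ℝ) (hA : A * Aᵀ = Aᵀ * A) :
    (symPart A * symPart A).trace = frobNorm (symPart A) ^ 2 ∧
    (symPart A * symPart A).trace = 1 / 2 * frobNorm A ^ 2 + 1 / 2 * (A * A).trace ∧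
    ∀ (B : Matrix (Fin n) (Fin n) ℝ),
      A ∈ closure {M : Matrix (Fin n) (Fin n) ℝ |
        ∃ g : GL (Fin n) ℝ, M = (g : Matrix (Fin n) (Fin n) ℝ) * B * (↑g⁻¹ : Matrix (Fin n) (Fin n) ℝ)} →
      ∀ h : GL (Fin n) ℝ,
        (symPart A * symPart A).trace ≤
          (symPart ((h : Matrix (Fin n) (Fin n) ℝ) * B * (↑h⁻¹ : Matrix (Fin n) (Fin n) ℝ)) *
            symPart ((h : Matrix (Fin n) (Fin n) ℝ) * B * (↑h⁻¹ : Matrix (Fin n) (Fin n) ℝ))).trace := by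
  refine ⟨trace_symPart_mul_self_eq_frobNorm_sq A, trace_symPart_mul_self A, fun B hB h => ?_⟩
  set M := (h : Matrix (Fin n) (Fin n) ℝ) * B * (↑h⁻¹ : Matrix (Fin n) (Fin n) ℝ) with hM
  have htrace : (A * A).trace = (M * M).trace :=
    (trace_mul_self_eq_of_mem_closure_conj hB).trans (trace_mul_self_units_conj h B).symm
  have hcharpoly : A.charpoly = M.charpoly :=
    (charpoly_eq_of_mem_closure_conj_s15 hB).trans (by rw [hM, coe_units_inv, charpoly_units_conj])
  rw [trace_symPart_mul_self, trace_symPart_mul_self, htrace]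
  linarith [frobNorm_sq_le_of_charpoly_eq hA hcharpoly]
end

section
/- Let $r \ge 1$, $a \ge 0$, and consider $f(x_1,\dots,x_r) = \frac{(x_1+\cdots+x_r+a)^2}{x_1^2+\cdots+x_r^2+a x_1}$ on the region $x_1 \ge 1$, $x_i > 0$. Then the supremum of $f$ over this region equals $r+a$ and is attained at $(1,\dots,1)$. -/
theorem stmt19 (r : ℕ) (hr : 1 ≤ r) (a : ℝ) (ha : 0 ≤ a) :
    IsGreatest
      {y : ℝ | ∃ x : Fin r → ℝ, 1 ≤ x ⟨0, hr⟩ ∧ (∀ i, i ≠ ⟨0, hr⟩ → 0 < x i) ∧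
        y = (∑ i, x i + a) ^ 2 / (∑ i, x i ^ 2 + a * x ⟨0, hr⟩)}
      (r + a) := by
  have hr' : (1:ℝ) ≤ (r:ℝ) := by exact_mod_cast hr
  have hra : (0:ℝ) < (r:ℝ) + a := by linarith
  constructor
  · refine ⟨fun _ => 1, le_refl 1, fun i _ => one_pos, ?_⟩
    simp only [Finset.sum_const, Finset.card_univ, Fintype.card_fin, nsmul_eq_mul,
      mul_one, one_pow]
    rw [sq, mul_div_assoc, div_self (ne_of_gt hra), mul_one]
  · rintro y ⟨x, hx0, hxi, rfl⟩
    set i0 : Fin r := ⟨0, hr⟩ with hi0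
    have hx0' : 0 < x i0 := lt_of_lt_of_le one_pos hx0
    have hxa : 0 < x i0 + a := by positivity
    have hden : 0 < ∑ i, x i ^ 2 + a * x i0 := by
      have h1 : 0 < ∑ i, x i ^ 2 := by
        refine Finset.sum_pos (fun i _ => ?_) ⟨i0, Finset.mem_univ i0⟩
        rcases eq_or_ne i i0 with h | h
        · subst h; positivity
        · exact pow_pos (hxi i h) 2
      positivity
    rw [div_le_iff₀ hden]
    -- weighted Cauchy–Schwarz
    set w : Fin r → ℝ := fun i => if i = i0 then (x i0 + a) / x i0 else 1 with hwdef
    set g : Fin r → ℝ := fun i => if i = i0 then x i0 * (x i0 + a) else x i ^ 2 with hgdef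
    set v : Fin r → ℝ := fun i => if i = i0 then x i0 + a else x i with hvdef
    have hCS := Finset.sum_sq_le_sum_mul_sum_of_sq_eq_mul Finset.univ
      (r := v) (f := w) (g := g)
      (fun i _ => by by_cases h : i = i0 <;> simp [hwdef, h] <;> positivity)
      (fun i _ => by
        by_cases h : i = i0 <;> simp [hgdef, h]
        · positivity
        · positivity)
      (fun i _ => by
        by_cases h : i = i0
        · simp only [hwdef, hgdef, hvdef, h, if_pos]
          field_simp
        · simp [hwdef, hgdef, hvdef, h])
    have hv : ∑ i, v i = ∑ i, x i + a := by
      have : ∀ i, v i = x i + (if i = i0 then a else 0) := by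
        intro i; by_cases h : i = i0 <;> simp [hvdef, h]
      simp_rw [this, Finset.sum_add_distrib, Finset.sum_ite_eq' Finset.univ i0 (fun _ => a)]
      simp
    have hw : ∑ i, w i = (r:ℝ) + a / x i0 := by
      have : ∀ i, w i = 1 + (if i = i0 then a / x i0 else 0) := by
        intro i
        by_cases h : i = i0 <;> simp [hwdef, h]
        field_simp
      simp_rw [this, Finset.sum_add_distrib,
        Finset.sum_ite_eq' Finset.univ i0 (fun _ => a / x i0)]
      simp
    have hg : ∑ i, g i = ∑ i, x i ^ 2 + a * x i0 := by
      have : ∀ i, g i = x i ^ 2 + (if i = i0 then a * x i0 else 0) := by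
        intro i; by_cases h : i = i0 <;> simp [hgdef, h]; ring
      simp_rw [this, Finset.sum_add_distrib,
        Finset.sum_ite_eq' Finset.univ i0 (fun _ => a * x i0)]
      simp
    rw [hv, hw, hg] at hCS
    have hwle : (r:ℝ) + a / x i0 ≤ (r:ℝ) + a := by
      have : a / x i0 ≤ a := by
        rw [div_le_iff₀ hx0']
        nlinarith
      linarith
    calc (∑ i, x i + a) ^ 2 ≤ ((r:ℝ) + a / x i0) * (∑ i, x i ^ 2 + a * x i0) := hCS
      _ ≤ ((r:ℝ) + a) * (∑ i, x i ^ 2 + a * x i0) := by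
          exact mul_le_mul_of_nonneg_right hwle (le_of_lt hden)
end
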